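/- Fix 1 ≤ ξ < ω₁ and let (x_i) be a normalized block sequence in 𝔛_{0,1}^{ω^ξ} with α_{<ω^ξ}((x_i)) > 0. Then there is a subsequence of (x_i) which is an ℓ_1^{ω^ξ} spreading model, i.e. there exist an infinite M ⊆ ℕ and ε > 0 such that for every G ∈ 𝓢_{ω^ξ} and all scalars (λ_i)_{i∈G}, ‖Σ_{i∈G} λ_i x_{m_i}‖ ≥ ε Σ_{i∈G} |λ_i|, where M = (m_i). -/

import Mathlib

open Filter Topology

noncomputable section

/-- The first uncountable ordinal `ω₁`. -/
def omega1 : Ordinal := (Cardinal.aleph 1).ord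

/-- The combinatorial operation `𝓕[𝓖]` on families of finite subsets of `ℕ`:
all unions `E₁ ∪ ⋯ ∪ Eₙ` with `E₁ < ⋯ < Eₙ` nonempty members of `𝓖` and
`(min Eᵢ)ᵢ ∈ 𝓕`. -/
def famOp (F G : Set (Finset ℕ)) : Set (Finset ℕ) :=
  {E | ∃ (n : ℕ) (Es : ℕ → Finset ℕ),
    (∀ i < n, Es i ∈ G) ∧ (∀ i < n, (Es i).Nonempty) ∧
    (∀ i j : ℕ, i < j → j < n → ∀ a ∈ Es i, ∀ b ∈ Es j, a < b) ∧
    (Finset.image (fun i => sInf ((Es i : Set ℕ))) (Finset.range n) ∈ F) ∧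
    E = (Finset.range n).biUnion Es}

/-- The first Schreier family `𝓢₁ = {E : |E| ≤ min E}`. -/
def schreierOne : Set (Finset ℕ) := {E : Finset ℕ | ∀ n ∈ E, E.card ≤ n}

/-- A system of Schreier families `(𝓢_ξ)` together with the fixed cofinal sequences
`(ξ_n)` used at countable limit ordinals: `𝓢_0 = {∅} ∪ {{n} : n ∈ ℕ}`,
`𝓢_{ξ+1} = 𝓢₁[𝓢_ξ]`, and at a countable limit `ξ`,
`𝓢_ξ = {E : ∃ n, n ≤ min E ∧ E ∈ 𝓢_{ξ_n}}` where `ξ_n ↑ ξ` and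
`𝓢_{ξ_n} ⊆ 𝓢_{ξ_{n+1}}`. -/
structure SchreierSystem where
  S : Ordinal → Set (Finset ℕ)
  seq : Ordinal → ℕ → Ordinal
  S_zero : S 0 = {E : Finset ℕ | E = ∅ ∨ ∃ n : ℕ, E = {n}}
  S_succ : ∀ ξ : Ordinal, S (ξ + 1) = famOp schreierOne (S ξ)
  seq_strictMono : ∀ ξ : Ordinal, ξ < omega1 → Order.IsSuccLimit ξ → StrictMono (seq ξ)
  seq_lt : ∀ ξ : Ordinal, ξ < omega1 → Order.IsSuccLimit ξ → ∀ n : ℕ, seq ξ n < ξ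
  seq_iSup : ∀ ξ : Ordinal, ξ < omega1 → Order.IsSuccLimit ξ → (⨆ n : ℕ, seq ξ n) = ξ
  S_seq_mono : ∀ ξ : Ordinal, ξ < omega1 → Order.IsSuccLimit ξ → ∀ n : ℕ, S (seq ξ n) ⊆ S (seq ξ (n + 1))
  S_limit : ∀ ξ : Ordinal, ξ < omega1 → Order.IsSuccLimit ξ →
    S ξ = {E : Finset ℕ | ∃ n : ℕ, (∀ m ∈ E, n ≤ m) ∧ E ∈ S (seq ξ n)}

section XSpace

/-- Finitely supported real sequences `c₀₀`. -/
abbrev c00 : Type := ℕ →₀ ℝ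

/-- The action of a functional `f ∈ c₀₀` on a vector `x ∈ c₀₀`: `f(x) = Σ_i f i * x i`. -/
def dotc (f x : c00) : ℝ := f.sum fun i a => a * x i

/-- Successive supports: every element of `supp f` is smaller than every element of
`supp g`. -/
def suppLt (f g : c00) : Prop := ∀ i ∈ f.support, ∀ j ∈ g.support, i < j

/-- The minimum of the support of `f`. -/
def minSupp (f : c00) : ℕ := sInf {i : ℕ | f i ≠ 0}

/-- The maximum of the support of `f` (`0` for `f = 0`). -/
def maxSupp (f : c00) : ℕ := f.support.sup id

/-- `α` is an `α`-average of size `ℓ` in `G`: an element of `G` of the form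
`(1/ℓ) (f_1 + ⋯ + f_d)` with `f_1 < ⋯ < f_d ∈ G`, `d ≤ ℓ` and `ℓ ≥ 2`. -/
def IsAvg (G : Set c00) (α : c00) (ℓ : ℕ) : Prop :=
  α ∈ G ∧ 2 ≤ ℓ ∧ ∃ (d : ℕ) (f : ℕ → c00), 1 ≤ d ∧ d ≤ ℓ ∧ (∀ q < d, f q ∈ G) ∧
    (∀ q : ℕ, q + 1 < d → suppLt (f q) (f (q + 1))) ∧
    α = (ℓ : ℝ)⁻¹ • ∑ q ∈ Finset.range d, f q

/-- `(α_q)_{q<d}` (with sizes `sz q`) is a very fast growing and `Fam`-admissible sequence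
of `α`-averages in `G`. -/
def IsVFGAdm (G : Set c00) (Fam : Set (Finset ℕ)) (α : ℕ → c00) (sz : ℕ → ℕ) (d : ℕ) : Prop :=
  (∀ q < d, IsAvg G (α q) (sz q)) ∧
  (∀ q : ℕ, q + 1 < d → suppLt (α q) (α (q + 1))) ∧
  (∀ q : ℕ, q + 1 < d → sz q < sz (q + 1)) ∧
  (∀ q : ℕ, q + 1 < d → maxSupp (α q) < sz (q + 1)) ∧
  ((Finset.range d).image fun q => minSupp (α q)) ∈ Fam

/-- One step of the inductive construction of the norming set: `W_{m+1}` from `W_m`. -/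
def Wstep (Fam : Set (Finset ℕ)) (G : Set c00) : Set c00 :=
  G ∪
  {g | ∃ (ℓ d : ℕ) (f : ℕ → c00), 2 ≤ ℓ ∧ 1 ≤ d ∧ d ≤ ℓ ∧ (∀ q < d, f q ∈ G) ∧
      (∀ q : ℕ, q + 1 < d → suppLt (f q) (f (q + 1))) ∧
      g = (ℓ : ℝ)⁻¹ • ∑ q ∈ Finset.range d, f q} ∪
  {g | ∃ (d : ℕ) (α : ℕ → c00) (sz : ℕ → ℕ), 1 ≤ d ∧ IsVFGAdm G Fam α sz d ∧
      g = ∑ q ∈ Finset.range d, α q}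

/-- The levels `W_m` of the norming set: `W_0 = {± e_n}` and `W_{m+1} = Wstep Fam W_m`. -/
def Wlevel (Fam : Set (Finset ℕ)) : ℕ → Set c00
  | 0 => {f | ∃ n : ℕ, f = Finsupp.single n 1 ∨ f = -Finsupp.single n 1}
  | m + 1 => Wstep Fam (Wlevel Fam m)

/-- The norming set `W = ⋃_m W_m` (for `Fam = 𝓢_{ω^ξ}` this is the norming set of
`𝔛_{0,1}^{ω^ξ}`). -/
def Wset (Fam : Set (Finset ℕ)) : Set c00 := ⋃ m : ℕ, Wlevel Fam m

/-- The norm of `𝔛_{0,1}^{ω^ξ}` on finitely supported vectors: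
`‖x‖ = sup {f(x) : f ∈ W}`. -/
noncomputable def Xnorm (Fam : Set (Finset ℕ)) (x : c00) : ℝ :=
  sSup {r : ℝ | ∃ f ∈ Wset Fam, r = dotc f x}

/-- A block sequence of the unit vector basis: nonzero finitely supported vectors with
successive supports. -/
def IsBlock (x : ℕ → c00) : Prop :=
  (∀ n, x n ≠ 0) ∧ ∀ m n : ℕ, m < n → suppLt (x m) (x n)

/-- A normalized block sequence of the unit vector basis of the space with norming
family `Fam`. -/
def IsNormBlock (Fam : Set (Finset ℕ)) (x : ℕ → c00) : Prop :=
  IsBlock x ∧ ∀ n, Xnorm Fam (x n) = 1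

end XSpace

/-- The index `α_{<ω^ξ}((x_k)) = 0`: for every `n`, every very fast growing sequence
`(α_q)` of `α`-averages in `W`, every successive sequence `(F_k)` of finite sets such
that each `(α_q)_{q ∈ F_k}` is `𝓢_{ξ_n}`-admissible (where `(ξ_n)` is the fixed sequence
defining `𝓢_{ω^ξ}`), and every subsequence `(x_{m_k})`,
`lim_k Σ_{q ∈ F_k} |α_q(x_{m_k})| = 0`. -/
def AlphaZero (SS : SchreierSystem) (ξ : Ordinal) (x : ℕ → c00) : Prop :=
  ∀ (n : ℕ) (α : ℕ → c00) (sz : ℕ → ℕ),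
    (∀ q : ℕ, IsAvg (Wset (SS.S (Ordinal.omega0 ^ ξ))) (α q) (sz q)) →
    (∀ q : ℕ, suppLt (α q) (α (q + 1))) →
    (∀ q : ℕ, sz q < sz (q + 1)) →
    (∀ q : ℕ, maxSupp (α q) < sz (q + 1)) →
    ∀ F : ℕ → Finset ℕ,
      (∀ m k : ℕ, m < k → ∀ i ∈ F m, ∀ j ∈ F k, i < j) →
      (∀ k : ℕ, ((F k).image fun q => minSupp (α q)) ∈
          SS.S (SS.seq (Ordinal.omega0 ^ ξ) n)) →
      ∀ m : ℕ → ℕ, StrictMono m →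
        Filter.Tendsto (fun k => ∑ q ∈ F k, |dotc (α q) (x (m k))|)
          Filter.atTop (nhds 0)

/-!
Unwinding `α_{<ω^ξ}((x_i)) > 0` gives `n`, a very fast growing sequence `(α_q)` in `W`, successive
sets `F_k` with `(α_q)_{q ∈ F_k}` `𝓢_{ξ_n}`-admissible and a subsequence `(x_{m_k})` with
`Σ_{q ∈ F_k} |α_q(x_{m_k})| ≥ ε` infinitely often. Thinning out, the supports of the blocks
`x_{m_k}, (α_q)_{q ∈ F_k}` become successive and start beyond a growth function `φ` for which
`𝓢_{ω^ξ}[𝓢_{ξ_n}] ⊆ 𝓢_{ξ_n + ω^ξ} = 𝓢_{ω^ξ}`. Then for `G ∈ 𝓢_{ω^ξ}` the averages `α_q`,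
`q ∈ ⋃_{i ∈ G} F_{k_i}`, are `𝓢_{ω^ξ}`-admissible, so their sum with signs matched to
`v = Σ_{i ∈ G} λ_i x_{m_{k_i}}` lies in `W`, and it evaluates on `v` to at least `ε Σ_{i ∈ G} |λ_i|`
because each `α_q` only sees one `x_{m_{k_i}}`.
-/

section Schreier

variable (SS : SchreierSystem)

theorem sInf_mem_of_nonempty {A : Finset ℕ} (h : A.Nonempty) : sInf (A : Set ℕ) ∈ A := by
  exact_mod_cast Nat.sInf_mem (s := (A : Set ℕ)) (by exact_mod_cast h)

theorem add_lt_omega1 {a b : Ordinal} (ha : a < omega1) (hb : b < omega1) : a + b < omega1 :=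
  Ordinal.isPrincipal_add_ord (Cardinal.aleph0_le_aleph 1) ha hb

theorem empty_mem_S {β : Ordinal} (hβ : β < omega1) : ∅ ∈ SS.S β := by
  induction β using Ordinal.limitRecOn with
  | zero => rw [SS.S_zero]; exact Or.inl rfl
  | add_one γ _ =>
    rw [SS.S_succ]
    exact ⟨0, fun _ => ∅, by simp, by simp, by simp, by simp [schreierOne], by simp⟩
  | limit β hlim ih =>
    rw [SS.S_limit β hβ hlim]
    have hlt := SS.seq_lt β hβ hlim 0
    exact ⟨0, by simp, ih _ hlt (hlt.trans hβ)⟩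

theorem mem_S_succ_of_mem {γ : Ordinal} {E : Finset ℕ} (hE : E ∈ SS.S γ) (hpos : ∀ m ∈ E, 1 ≤ m) :
    E ∈ SS.S (γ + 1) := by
  rw [SS.S_succ]
  rcases E.eq_empty_or_nonempty with rfl | hne
  · exact ⟨0, fun _ => ∅, by simp, by simp, by simp, by simp [schreierOne], by simp⟩
  refine ⟨1, fun _ => E, fun _ _ => hE, fun _ _ => hne, by omega, ?_, by simp⟩
  simp only [Finset.range_one, Finset.image_singleton, schreierOne, Set.mem_ofPred_eq,
    Finset.mem_singleton, forall_eq, Finset.card_singleton]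
  exact hpos _ (sInf_mem_of_nonempty hne)

theorem exists_mem_S_of_lt {β : Ordinal} (hβ : β < omega1) {a : Ordinal} (ha : a < β) :
    ∃ N : ℕ, ∀ E ∈ SS.S a, (∀ m ∈ E, N ≤ m) → E ∈ SS.S β := by
  induction β using Ordinal.limitRecOn generalizing a with
  | zero => exact absurd ha ((zero_le (a := a)).not_gt)
  | add_one γ ih =>
    have hγ : γ < omega1 := (Order.lt_add_one_iff.2 le_rfl).trans hβ
    rcases (Order.lt_add_one_iff.1 ha).lt_or_eq with ha | rfl
    · obtain ⟨N, hN⟩ := ih hγ ha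
      exact ⟨max N 1, fun E hE hN' => mem_S_succ_of_mem SS
        (hN E hE fun m hm => (le_max_left _ _).trans (hN' m hm))
        fun m hm => (le_max_right _ _).trans (hN' m hm)⟩
    · exact ⟨1, fun E hE => mem_S_succ_of_mem SS hE⟩
  | limit β hlim ih =>
    obtain ⟨k, hak⟩ : ∃ k, a < SS.seq β k := by
      by_contra! hcon
      have := ciSup_le' hcon
      rw [SS.seq_iSup β hβ hlim] at this
      exact this.not_gt ha
    have hk := SS.seq_lt β hβ hlim k
    obtain ⟨N, hN⟩ := ih _ hk (hk.trans hβ) hak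
    refine ⟨max N k, fun E hE hN' => ?_⟩
    rw [SS.S_limit β hβ hlim]
    exact ⟨k, fun m hm => (le_max_right _ _).trans (hN' m hm),
      hN E hE fun m hm => (le_max_left _ _).trans (hN' m hm)⟩

theorem card_image_sInf_range {Gs : ℕ → Finset ℕ} {r : ℕ} (hne : ∀ t < r, (Gs t).Nonempty)
    (hsuc : ∀ t t' : ℕ, t < t' → t' < r → ∀ a ∈ Gs t, ∀ b ∈ Gs t', a < b) :
    ((Finset.range r).image fun t => sInf (Gs t : Set ℕ)).card = r := by
  rw [Finset.card_image_of_injOn, Finset.card_range]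
  intro t ht t' ht' heq
  simp only [Finset.coe_range, Set.mem_Iio] at ht ht'
  have key : ∀ {t t'}, t < t' → t' < r → sInf (Gs t : Set ℕ) < sInf (Gs t' : Set ℕ) :=
    fun hlt ht' => hsuc _ _ hlt ht' _ (sInf_mem_of_nonempty (hne _ (hlt.trans ht'))) _
      (sInf_mem_of_nonempty (hne _ ht'))
  rcases lt_trichotomy t t' with hlt | rfl | hlt
  · exact absurd heq (key hlt ht').ne
  · rfl
  · exact absurd heq (key hlt ht).ne'

/-- `𝓢_ζ[𝓢_η] ⊆ 𝓢_{η+ζ}` for blocks that start late enough. -/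
theorem exists_biUnion_mem_S_add {η : Ordinal} (hη : η < omega1) {ζ : Ordinal}
    (hζ : ζ < omega1) :
    ∃ φ : ℕ → ℕ, (∀ i, i ≤ φ i) ∧ ∀ G ∈ SS.S ζ, ∀ E : ℕ → Finset ℕ,
      (∀ i ∈ G, E i ∈ SS.S η) → (∀ i ∈ G, (E i).Nonempty) →
      (∀ i ∈ G, ∀ j ∈ G, i < j → ∀ a ∈ E i, ∀ b ∈ E j, a < b) →
      (∀ i ∈ G, ∀ a ∈ E i, φ i ≤ a) → G.biUnion E ∈ SS.S (η + ζ) := by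
  induction ζ using Ordinal.limitRecOn with
  | zero =>
    refine ⟨id, fun _ => le_rfl, fun G hG E hE _ _ _ => ?_⟩
    rw [add_zero]
    rw [SS.S_zero] at hG
    rcases hG with rfl | ⟨i, rfl⟩
    · simpa using empty_mem_S SS hη
    · simpa using hE i (Finset.mem_singleton_self i)
  | add_one γ ih =>
    obtain ⟨φ, hφid, hφ⟩ := ih ((Order.lt_add_one_iff.2 le_rfl).trans hζ)
    refine ⟨φ, hφid, fun G hG E hE hne hsuc hφE => ?_⟩
    rw [SS.S_succ] at hG
    obtain ⟨r, Gs, hGs, hGsne, hGsuc, hGmin, rfl⟩ := hG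
    have hmem : ∀ t < r, ∀ i ∈ Gs t, i ∈ (Finset.range r).biUnion Gs :=
      fun t ht i hi => Finset.mem_biUnion.2 ⟨t, Finset.mem_range.2 ht, hi⟩
    have hUne : ∀ t < r, ((Gs t).biUnion E).Nonempty := fun t ht =>
      (hGsne t ht).biUnion fun i hi => hne i (hmem t ht i hi)
    rw [← add_assoc, SS.S_succ, Finset.biUnion_biUnion]
    refine ⟨r, fun t => (Gs t).biUnion E, fun t ht => ?_, hUne, fun t t' htt' ht' a ha b hb => ?_,
      fun mm hmm => ?_, rfl⟩
    · exact hφ (Gs t) (hGs t ht) E (fun i hi => hE i (hmem t ht i hi))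
        (fun i hi => hne i (hmem t ht i hi))
        (fun i hi j hj => hsuc i (hmem t ht i hi) j (hmem t ht j hj))
        (fun i hi => hφE i (hmem t ht i hi))
    · obtain ⟨i, hi, hai⟩ := Finset.mem_biUnion.1 ha
      obtain ⟨j, hj, hbj⟩ := Finset.mem_biUnion.1 hb
      exact hsuc i (hmem t (htt'.trans ht') i hi) j (hmem t' ht' j hj)
        (hGsuc t t' htt' ht' i hi j hj) a hai b hbj
    · obtain ⟨t, ht, rfl⟩ := Finset.mem_image.1 hmm
      rw [Finset.mem_range] at ht
      obtain ⟨i, hi, hmi⟩ := Finset.mem_biUnion.1 (sInf_mem_of_nonempty (hUne t ht))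
      have hr : r ≤ sInf (Gs t : Set ℕ) := by
        simpa only [card_image_sInf_range hGsne hGsuc] using
          hGmin _ (Finset.mem_image_of_mem _ (Finset.mem_range.2 ht))
      calc _ ≤ (Finset.range r).card := Finset.card_image_le
        _ = r := Finset.card_range r
        _ ≤ sInf (Gs t : Set ℕ) := hr
        _ ≤ i := Nat.sInf_le (by exact_mod_cast hi)
        _ ≤ φ i := hφid i
        _ ≤ _ := hφE i (hmem t ht i hi) _ hmi
  | limit ζ hlim ih =>
    have hseq := SS.seq_lt ζ hζ hlim
    choose φ hφid hφ using fun p => ih _ (hseq p) ((hseq p).trans hζ)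
    choose N hN using fun p =>
      exists_mem_S_of_lt SS (add_lt_omega1 hη hζ) ((add_lt_add_iff_left η).2 (hseq p))
    -- for `i ∈ G` we have `p ≤ min G ≤ i`, so `ψ i` dominates the `p`-th constraints
    let ψ : ℕ → ℕ := fun i => (Finset.range (i + 1)).sup fun p => max (φ p i) (N p)
    refine ⟨fun i => max i (ψ i), fun i => le_max_left _ _, fun G hG E hE hne hsuc hφE => ?_⟩
    rw [SS.S_limit ζ hζ hlim] at hG
    obtain ⟨p, hpG, hGp⟩ := hG
    have hbound : ∀ i ∈ G, ∀ a ∈ E i, max (φ p i) (N p) ≤ a := fun i hi a ha =>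
      (Finset.le_sup (f := fun p => max (φ p i) (N p))
        (Finset.mem_range.2 (Nat.lt_succ_of_le (hpG i hi)))).trans
        ((le_max_right _ _).trans (hφE i hi a ha))
    refine hN p _ (hφ p G hGp E hE hne hsuc fun i hi a ha =>
      (le_max_left _ _).trans (hbound i hi a ha)) fun mm hmm => ?_
    obtain ⟨i, hi, hmi⟩ := Finset.mem_biUnion.1 hmm
    exact (le_max_right _ _).trans (hbound i hi mm hmi)

end Schreier

def Successive (A : ℕ → Finset ℕ) : Prop :=
  ∀ i j, i < j → ∀ a ∈ A i, ∀ b ∈ A j, a < b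

namespace Successive

variable {A : ℕ → Finset ℕ}

theorem comp (h : Successive A) {s : ℕ → ℕ} (hs : StrictMono s) : Successive (A ∘ s) :=
  fun _ _ hij => h _ _ (hs hij)

theorem pairwiseDisjoint (h : Successive A) (s : Set ℕ) : s.PairwiseDisjoint A := by
  intro i _ j _ hij
  refine Finset.disjoint_left.2 fun a hai haj => ?_
  rcases hij.lt_or_gt with hlt | hlt
  · exact (h i j hlt a hai a haj).false
  · exact (h j i hlt a haj a hai).false

theorem biUnion {F : ℕ → Finset ℕ} (hF : Successive F) (hA : Successive A) :
    Successive fun k => (F k).biUnion A := by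
  intro i j hij a ha b hb
  obtain ⟨p, hp, hap⟩ := Finset.mem_biUnion.1 ha
  obtain ⟨q, hq, hbq⟩ := Finset.mem_biUnion.1 hb
  exact hA p q (hF i j hij p hp q hq) a hap b hbq

-- each `n` lies in at most one `A k`
theorem eventually_forall_lt (h : Successive A) (B : ℕ) : ∀ᶠ k in atTop, ∀ a ∈ A k, B < a := by
  suffices ∀ B, ∀ᶠ k in atTop, ∀ a ∈ A k, B ≤ a from this (B + 1)
  intro B
  induction B with
  | zero => exact .of_forall fun _ _ _ => Nat.zero_le _
  | succ B ih =>
    by_cases hB : ∃ k₀, B ∈ A k₀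
    · obtain ⟨k₀, hk₀⟩ := hB
      filter_upwards [eventually_gt_atTop k₀] with k hk a ha using h k₀ k hk B hk₀ a ha
    · push Not at hB
      filter_upwards [ih] with k hk a ha using lt_of_le_of_ne (hk a ha) fun e => hB k (e ▸ ha)

end Successive

theorem exists_strictMono_successive {A : ℕ → Finset ℕ} {P : ℕ → Prop}
    (hP : ∃ᶠ k in atTop, P k) (hA : ∀ B, ∀ᶠ k in atTop, ∀ a ∈ A k, B < a) (Φ : ℕ → ℕ) :
    ∃ k : ℕ → ℕ, StrictMono k ∧ (∀ j, P (k j)) ∧ Successive (A ∘ k) ∧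
      ∀ j, ∀ a ∈ A (k j), Φ j < a := by
  obtain ⟨f, hfP, hf⟩ := exists_seq_of_forall_finset_exists P
    (fun a b => a < b ∧ ∀ u ∈ A a, ∀ v ∈ A b, u < v) fun s _ => by
      obtain ⟨y, hy, hyA, hys⟩ := (hP.and_eventually ((hA (s.sup fun a => (A a).sup id)).and
        (eventually_gt_atTop (s.sup id)))).exists
      refine ⟨y, hy, fun a ha => ⟨(Finset.le_sup (f := id) ha).trans_lt hys, fun u hu v hv => ?_⟩⟩
      exact ((Finset.le_sup (f := id) hu).trans
        (Finset.le_sup (f := fun a => (A a).sup id) ha)).trans_lt (hyA v hv)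
  have hf_mono : StrictMono f := fun i j hij => (hf i j hij).1
  obtain ⟨s, hs, hsΦ⟩ := extraction_forall_of_eventually fun j =>
    hf_mono.tendsto_atTop.eventually (hA (Φ j))
  exact ⟨f ∘ s, hf_mono.comp hs, fun j => hfP _, fun i j hij => (hf _ _ (hs hij)).2, hsΦ⟩

section Vectors

theorem minSupp_mem {f : c00} (hf : f ≠ 0) : minSupp f ∈ f.support :=
  Finsupp.mem_support_iff.2 (Nat.sInf_mem (s := {i | f i ≠ 0})
    (Finsupp.support_nonempty_iff.2 hf |>.imp fun _ => Finsupp.mem_support_iff.1))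

@[simp] theorem minSupp_neg (f : c00) : minSupp (-f) = minSupp f := by
  simp [minSupp]

@[simp] theorem maxSupp_neg (f : c00) : maxSupp (-f) = maxSupp f := by
  simp [maxSupp]

@[simp] theorem suppLt_neg {f g : c00} : suppLt (-f) (-g) ↔ suppLt f g := by
  simp [suppLt]

theorem suppLt.trans {f g h : c00} (hfg : suppLt f g) (hgh : suppLt g h) (hg : g ≠ 0) :
    suppLt f h := by
  obtain ⟨b, hb⟩ := Finsupp.support_nonempty_iff.2 hg
  exact fun i hi j hj => (hfg i hi b hb).trans (hgh b hb j hj)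

theorem suppLt_of_succ {f : ℕ → c00} {d : ℕ} (hne : ∀ q < d, f q ≠ 0)
    (h : ∀ q, q + 1 < d → suppLt (f q) (f (q + 1))) {i j : ℕ} (hij : i < j) (hj : j < d) :
    suppLt (f i) (f j) := by
  induction j, hij using Nat.le_induction with
  | base => exact h i hj
  | succ j hij ih => exact (ih (by omega)).trans (h j hj) (hne j (by omega))

theorem successive_support_of_succ {f : ℕ → c00} (hne : ∀ q, f q ≠ 0)
    (h : ∀ q, suppLt (f q) (f (q + 1))) : Successive fun q => (f q).support :=
  fun _ j hij => suppLt_of_succ (d := j + 1) (fun q _ => hne q) (fun q _ => h q) hij j.lt_succ_self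

theorem pairwiseDisjoint_support_of_succ {f : ℕ → c00} {d : ℕ} (hne : ∀ q < d, f q ≠ 0)
    (h : ∀ q, q + 1 < d → suppLt (f q) (f (q + 1))) :
    (Finset.range d : Set ℕ).PairwiseDisjoint fun q => (f q).support := by
  have key : ∀ i j, i < j → j < d → Disjoint (f i).support (f j).support := fun i j hij hj =>
    Finset.disjoint_left.2 fun a hai haj => (suppLt_of_succ hne h hij hj a hai a haj).false
  intro i hi j hj hij
  simp only [Finset.coe_range, Set.mem_Iio] at hi hj
  rcases hij.lt_or_gt with hlt | hlt
  · exact key i j hlt hj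
  · exact (key j i hlt hi).symm

variable {ι : Type*} {s : Finset ι} {f : ι → c00}

theorem sum_apply_of_mem_support (hd : (s : Set ι).PairwiseDisjoint fun q => (f q).support)
    {q₀ : ι} (hq₀ : q₀ ∈ s) {i : ℕ} (hi : i ∈ (f q₀).support) : (∑ q ∈ s, f q) i = f q₀ i := by
  rw [Finsupp.finsetSum_apply]
  refine Finset.sum_eq_single_of_mem q₀ hq₀ fun q hq hne => ?_
  exact Finsupp.notMem_support_iff.1 (Finset.disjoint_left.1 (hd hq₀ hq hne.symm) hi)

theorem abs_sum_apply_le_one (hd : (s : Set ι).PairwiseDisjoint fun q => (f q).support)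
    (hf : ∀ q ∈ s, ∀ i, |f q i| ≤ 1) (i : ℕ) : |(∑ q ∈ s, f q) i| ≤ 1 := by
  by_cases hi : ∃ q ∈ s, i ∈ (f q).support
  · obtain ⟨q, hq, hiq⟩ := hi
    rw [sum_apply_of_mem_support hd hq hiq]
    exact hf q hq i
  · push Not at hi
    rw [Finsupp.finsetSum_apply,
      Finset.sum_eq_zero fun q hq => Finsupp.notMem_support_iff.1 (hi q hq)]
    simp

theorem sum_ne_zero_of_pairwiseDisjoint (hd : (s : Set ι).PairwiseDisjoint fun q => (f q).support)
    (hs : s.Nonempty) (hf : ∀ q ∈ s, f q ≠ 0) : ∑ q ∈ s, f q ≠ 0 := by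
  obtain ⟨q, hq⟩ := hs
  obtain ⟨i, hi⟩ := Finsupp.support_nonempty_iff.2 (hf q hq)
  intro h0
  have := sum_apply_of_mem_support hd hq hi
  rw [h0] at this
  exact Finsupp.mem_support_iff.1 hi this.symm

end Vectors

theorem dotc_sum_left {ι : Type*} (s : Finset ι) (f : ι → c00) (x : c00) :
    dotc (∑ q ∈ s, f q) x = ∑ q ∈ s, dotc (f q) x :=
  (Finsupp.sum_finsetSum_index (fun _ => zero_mul _) fun _ _ _ => add_mul _ _ _).symm

theorem dotc_sum_smul_right {ι : Type*} (s : Finset ι) (f : c00) (lam : ι → ℝ) (y : ι → c00) :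
    dotc f (∑ i ∈ s, lam i • y i) = ∑ i ∈ s, lam i * dotc f (y i) := by
  simp only [dotc, Finsupp.sum, Finsupp.finsetSum_apply, Finsupp.smul_apply, smul_eq_mul,
    Finset.mul_sum]
  rw [Finset.sum_comm]
  exact Finset.sum_congr rfl fun _ _ => Finset.sum_congr rfl fun _ _ => by ring

theorem dotc_neg_left (f x : c00) : dotc (-f) x = -dotc f x := by
  simp [dotc, Finsupp.sum_neg_index]

theorem dotc_eq_zero_of_disjoint {f x : c00} (h : Disjoint f.support x.support) : dotc f x = 0 :=
  Finset.sum_eq_zero fun i hi => by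
    change f i * x i = 0
    rw [Finsupp.notMem_support_iff.1 (Finset.disjoint_left.1 h hi), mul_zero]

theorem dotc_le_sum_abs {f : c00} (hf : ∀ i, |f i| ≤ 1) (x : c00) :
    dotc f x ≤ ∑ i ∈ x.support, |x i| := by
  rw [dotc, Finsupp.sum_of_support_subset f Finset.subset_union_left (fun i a => a * x i)
    fun _ _ => zero_mul _]
  calc ∑ i ∈ f.support ∪ x.support, f i * x i ≤ ∑ i ∈ f.support ∪ x.support, |x i| :=
        Finset.sum_le_sum fun i _ => (le_abs_self _).trans (by
          rw [abs_mul]; exact mul_le_of_le_one_left (abs_nonneg _) (hf i))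
    _ = ∑ i ∈ x.support, |x i| := (Finset.sum_subset Finset.subset_union_right fun i _ hi => by
          rw [Finsupp.notMem_support_iff.1 hi, abs_zero]).symm

section NormingSet

variable {Fam : Set (Finset ℕ)}

theorem Wlevel_mono : Monotone (Wlevel Fam) :=
  monotone_nat_of_le_succ fun _ _ hf => Or.inl (Or.inl hf)

theorem mem_Wset_of_mem_Wlevel {f : c00} {m : ℕ} (hf : f ∈ Wlevel Fam m) : f ∈ Wset Fam :=
  Set.mem_iUnion.2 ⟨m, hf⟩

theorem eventually_mem_Wlevel {f : c00} (hf : f ∈ Wset Fam) : ∀ᶠ m in atTop, f ∈ Wlevel Fam m := by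
  obtain ⟨m₀, hm₀⟩ := Set.mem_iUnion.1 hf
  filter_upwards [eventually_ge_atTop m₀] with m hm using Wlevel_mono hm hm₀

theorem IsAvg.eventually_Wlevel {a : c00} {ℓ : ℕ} (h : IsAvg (Wset Fam) a ℓ) :
    ∀ᶠ m in atTop, IsAvg (Wlevel Fam m) a ℓ := by
  obtain ⟨ha, hℓ, d, f, hd, hdℓ, hf, hsupp, rfl⟩ := h
  have hfm : ∀ᶠ m in atTop, ∀ q ∈ Finset.range d, f q ∈ Wlevel Fam m :=
    (eventually_all_finset _).2 fun q hq => eventually_mem_Wlevel (hf q (Finset.mem_range.1 hq))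
  filter_upwards [eventually_mem_Wlevel ha, hfm] with m ham hfm
  exact ⟨ham, hℓ, d, f, hd, hdℓ, fun q hq => hfm q (Finset.mem_range.2 hq), hsupp, rfl⟩

theorem IsVFGAdm.sum_mem_Wset {A : ℕ → c00} {SZ : ℕ → ℕ} {d : ℕ} (hd : 1 ≤ d)
    (h : IsVFGAdm (Wset Fam) Fam A SZ d) : ∑ q ∈ Finset.range d, A q ∈ Wset Fam := by
  obtain ⟨havg, hsupp, hsz, hmax, hadm⟩ := h
  obtain ⟨m, hm⟩ := ((eventually_all_finset (Finset.range d)).2 fun q hq =>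
    (havg q (Finset.mem_range.1 hq)).eventually_Wlevel).exists
  exact mem_Wset_of_mem_Wlevel (m := m + 1)
    (Or.inr ⟨d, A, SZ, hd, ⟨fun q hq => hm q (Finset.mem_range.2 hq), hsupp, hsz, hmax, hadm⟩, rfl⟩)

theorem sum_range_ne_zero_and_abs_le_one {f : ℕ → c00} {d : ℕ} (hd : 1 ≤ d)
    (hf : ∀ q < d, f q ≠ 0 ∧ ∀ i, |f q i| ≤ 1) (h : ∀ q, q + 1 < d → suppLt (f q) (f (q + 1))) :
    ∑ q ∈ Finset.range d, f q ≠ 0 ∧ ∀ i, |(∑ q ∈ Finset.range d, f q) i| ≤ 1 := by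
  have hdisj := pairwiseDisjoint_support_of_succ (fun q hq => (hf q hq).1) h
  exact ⟨sum_ne_zero_of_pairwiseDisjoint hdisj (Finset.nonempty_range_iff.2 (by omega))
      fun q hq => (hf q (Finset.mem_range.1 hq)).1,
    abs_sum_apply_le_one hdisj fun q hq => (hf q (Finset.mem_range.1 hq)).2⟩

theorem Wlevel_ne_zero_and_abs_le_one (m : ℕ) :
    ∀ f ∈ Wlevel Fam m, f ≠ 0 ∧ ∀ i, |f i| ≤ 1 := by
  induction m with
  | zero =>
    rintro f ⟨n, rfl | rfl⟩ <;> refine ⟨by simp, fun i => ?_⟩ <;>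
      simp only [Finsupp.neg_apply, abs_neg, Finsupp.single_apply] <;> split_ifs <;> simp
  | succ m ih =>
    rintro f ((hf | ⟨ℓ, d, g, hℓ, hd, -, hg, hsupp, rfl⟩) | ⟨d, α, sz, hd, ⟨havg, hsupp, -⟩, rfl⟩)
    · exact ih f hf
    · obtain ⟨hne, hle⟩ := sum_range_ne_zero_and_abs_le_one hd (fun q hq => ih _ (hg q hq)) hsupp
      have hℓ₁ : (1 : ℝ) ≤ ℓ := by exact_mod_cast (by omega : 1 ≤ ℓ)
      refine ⟨smul_ne_zero (inv_ne_zero (by positivity)) hne, fun i => ?_⟩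
      rw [Finsupp.smul_apply, smul_eq_mul, abs_mul, abs_inv, Nat.abs_cast]
      exact mul_le_one₀ (inv_le_one_of_one_le₀ hℓ₁) (abs_nonneg _) (hle i)
    · exact sum_range_ne_zero_and_abs_le_one hd (fun q hq => ih _ (havg q hq).1) hsupp

theorem ne_zero_of_mem_Wset {f : c00} (hf : f ∈ Wset Fam) : f ≠ 0 := by
  obtain ⟨m, hm⟩ := Set.mem_iUnion.1 hf
  exact (Wlevel_ne_zero_and_abs_le_one m f hm).1

theorem abs_apply_le_one_of_mem_Wset {f : c00} (hf : f ∈ Wset Fam) (i : ℕ) : |f i| ≤ 1 := by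
  obtain ⟨m, hm⟩ := Set.mem_iUnion.1 hf
  exact (Wlevel_ne_zero_and_abs_le_one m f hm).2 i

theorem IsAvg.neg {G : Set c00} (hG : ∀ f ∈ G, -f ∈ G) {a : c00} {ℓ : ℕ} (h : IsAvg G a ℓ) :
    IsAvg G (-a) ℓ := by
  obtain ⟨ha, hℓ, d, f, hd, hdℓ, hf, hsupp, rfl⟩ := h
  exact ⟨hG _ ha, hℓ, d, fun q => -f q, hd, hdℓ, fun q hq => hG _ (hf q hq),
    fun q hq => suppLt_neg.2 (hsupp q hq), by simp [Finset.sum_neg_distrib]⟩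

theorem Wlevel_neg (m : ℕ) : ∀ f ∈ Wlevel Fam m, -f ∈ Wlevel Fam m := by
  induction m with
  | zero =>
    rintro f ⟨n, rfl | rfl⟩
    · exact ⟨n, Or.inr rfl⟩
    · exact ⟨n, Or.inl (neg_neg _)⟩
  | succ m ih =>
    rintro f ((hf | ⟨ℓ, d, g, hℓ, hd, hdℓ, hg, hsupp, rfl⟩) |
      ⟨d, α, sz, hd, ⟨havg, hsupp, hsz, hmax, hadm⟩, rfl⟩)
    · exact Or.inl (Or.inl (ih f hf))
    · exact Or.inl (Or.inr ⟨ℓ, d, fun q => -g q, hℓ, hd, hdℓ, fun q hq => ih _ (hg q hq),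
        fun q hq => suppLt_neg.2 (hsupp q hq), by simp [Finset.sum_neg_distrib]⟩)
    · exact Or.inr ⟨d, fun q => -α q, sz, hd, ⟨fun q hq => (havg q hq).neg ih,
        fun q hq => suppLt_neg.2 (hsupp q hq), hsz, by simpa using hmax, by simpa using hadm⟩,
        by simp [Finset.sum_neg_distrib]⟩

theorem neg_mem_Wset {f : c00} (hf : f ∈ Wset Fam) : -f ∈ Wset Fam := by
  obtain ⟨m, hm⟩ := Set.mem_iUnion.1 hf
  exact mem_Wset_of_mem_Wlevel (Wlevel_neg m f hm)

theorem dotc_le_Xnorm {f : c00} (hf : f ∈ Wset Fam) (x : c00) : dotc f x ≤ Xnorm Fam x :=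
  le_csSup ⟨∑ i ∈ x.support, |x i|, by
    rintro r ⟨g, hg, rfl⟩; exact dotc_le_sum_abs (abs_apply_le_one_of_mem_Wset hg) x⟩ ⟨f, hf, rfl⟩

theorem Xnorm_nonneg (Fam : Set (Finset ℕ)) (x : c00) : 0 ≤ Xnorm Fam x := by
  have he : Finsupp.single 0 1 ∈ Wset Fam := mem_Wset_of_mem_Wlevel (m := 0) ⟨0, Or.inl rfl⟩
  have h₁ := dotc_le_Xnorm he x
  have h₂ := dotc_le_Xnorm (neg_mem_Wset he) x
  rw [dotc_neg_left] at h₂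
  linarith

end NormingSet

theorem Finset.exists_strictMonoOn_image_range (Q : Finset ℕ) :
    ∃ s : ℕ → ℕ, StrictMonoOn s (Set.Iio Q.card) ∧ (Finset.range Q.card).image s = Q := by
  let e := Q.orderEmbOfFin rfl
  refine ⟨fun t => if ht : t < Q.card then e ⟨t, ht⟩ else 0, fun a ha b hb hab => ?_, ?_⟩
  · simp only [Set.mem_Iio] at ha hb
    simp only [dif_pos ha, dif_pos hb]
    exact e.strictMono hab
  · ext q
    simp only [Finset.mem_image, Finset.mem_range]
    constructor
    · rintro ⟨t, ht, rfl⟩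
      rw [dif_pos ht]
      exact Q.orderEmbOfFin_mem rfl _
    · intro hq
      obtain ⟨t, rfl⟩ : q ∈ Set.range e := (Q.range_orderEmbOfFin rfl).symm ▸ hq
      exact ⟨t, t.2, dif_pos t.2⟩

structure IsVeryFastGrowing (G : Set c00) (α : ℕ → c00) (sz : ℕ → ℕ) : Prop where
  isAvg : ∀ q, IsAvg G (α q) (sz q)
  suppLt_succ : ∀ q, suppLt (α q) (α (q + 1))
  sz_lt_succ : ∀ q, sz q < sz (q + 1)
  maxSupp_lt : ∀ q, maxSupp (α q) < sz (q + 1)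

namespace IsVeryFastGrowing

variable {Fam : Set (Finset ℕ)} {α : ℕ → c00} {sz : ℕ → ℕ}

theorem ne_zero (h : IsVeryFastGrowing (Wset Fam) α sz) (q : ℕ) : α q ≠ 0 :=
  ne_zero_of_mem_Wset (h.isAvg q).1

theorem successive_support (h : IsVeryFastGrowing (Wset Fam) α sz) :
    Successive fun q => (α q).support :=
  successive_support_of_succ h.ne_zero h.suppLt_succ

theorem sz_strictMono (h : IsVeryFastGrowing (Wset Fam) α sz) : StrictMono sz :=
  strictMono_nat_of_lt_succ h.sz_lt_succ

theorem isVFGAdm_comp (h : IsVeryFastGrowing (Wset Fam) α sz)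
    {s : ℕ → ℕ} {d : ℕ} (hs : StrictMonoOn s (Set.Iio d))
    (hadm : ((Finset.range d).image fun t => minSupp (α (s t))) ∈ Fam) :
    IsVFGAdm (Wset Fam) Fam (fun t => α (s t)) (fun t => sz (s t)) d := by
  have hst : ∀ t, t + 1 < d → s t < s (t + 1) := fun t ht =>
    hs (Set.mem_Iio.2 (by omega)) (Set.mem_Iio.2 ht) (lt_add_one t)
  exact ⟨fun t _ => h.isAvg (s t), fun t ht => h.successive_support _ _ (hst t ht),
    fun t ht => h.sz_strictMono (hst t ht),
    fun t ht => (h.maxSupp_lt _).trans_le (h.sz_strictMono.monotone (hst t ht)), hadm⟩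

theorem sum_mem_Wset (h : IsVeryFastGrowing (Wset Fam) α sz) {Q : Finset ℕ} (hQ : Q.Nonempty)
    (hadm : (Q.image fun q => minSupp (α q)) ∈ Fam) : ∑ q ∈ Q, α q ∈ Wset Fam := by
  obtain ⟨s, hs, hsQ⟩ := Q.exists_strictMonoOn_image_range
  rw [← hsQ, Finset.sum_image fun a ha b hb => hs.injOn (by simpa using ha) (by simpa using hb)]
  rw [← hsQ, Finset.image_image] at hadm
  exact (h.isVFGAdm_comp hs hadm).sum_mem_Wset (Finset.card_pos.2 hQ)

theorem ite_neg (h : IsVeryFastGrowing (Wset Fam) α sz) (p : ℕ → Prop) [DecidablePred p] :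
    IsVeryFastGrowing (Wset Fam) (fun q => if p q then -α q else α q) sz := by
  have hsupp : ∀ q, (if p q then -α q else α q).support = (α q).support := fun q => by
    split_ifs <;> simp
  refine ⟨fun q => ?_, fun q => ?_, h.sz_lt_succ, fun q => ?_⟩
  · split_ifs
    · exact (h.isAvg q).neg fun _ => neg_mem_Wset
    · exact h.isAvg q
  · unfold suppLt
    rw [hsupp, hsupp]
    exact h.suppLt_succ q
  · rw [maxSupp, hsupp]
    exact h.maxSupp_lt q

/-- The functional `Σ_{q ∈ Q} ± α_q`, with the signs matched to `v`, lies in the norming set. -/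
theorem sum_abs_dotc_le_Xnorm (h : IsVeryFastGrowing (Wset Fam) α sz)
    {Q : Finset ℕ} (hadm : (Q.image fun q => minSupp (α q)) ∈ Fam)
    (v : c00) : ∑ q ∈ Q, |dotc (α q) v| ≤ Xnorm Fam v := by
  classical
  rcases Q.eq_empty_or_nonempty with rfl | hQ
  · simpa using Xnorm_nonneg Fam v
  let β : ℕ → c00 := fun q => if dotc (α q) v < 0 then -α q else α q
  have hβmin : ∀ q, minSupp (β q) = minSupp (α q) := fun q => by
    simp only [β]
    split_ifs <;> simp
  have hβ : ∀ q, |dotc (α q) v| = dotc (β q) v := fun q => by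
    simp only [β]
    split_ifs with hq
    · rw [dotc_neg_left, abs_of_neg hq]
    · rw [abs_of_nonneg (not_lt.1 hq)]
  calc ∑ q ∈ Q, |dotc (α q) v| = dotc (∑ q ∈ Q, β q) v := by
        rw [dotc_sum_left Q]
        exact Finset.sum_congr rfl fun q _ => hβ q
    _ ≤ Xnorm Fam v :=
        dotc_le_Xnorm ((h.ite_neg _).sum_mem_Wset hQ
          (by rwa [Finset.image_congr fun q _ => hβmin q])) v

theorem le_Xnorm_of_separated (h : IsVeryFastGrowing (Wset Fam) α sz)
    {F : ℕ → Finset ℕ} (hF : Successive F) {y : ℕ → c00} {ε : ℝ}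
    (hgood : ∀ i, ε ≤ ∑ q ∈ F i, |dotc (α q) (y i)|)
    (hsep : ∀ i j, i ≠ j → ∀ q ∈ F i, dotc (α q) (y j) = 0) {G : Finset ℕ}
    (hG : ((G.biUnion F).image fun q => minSupp (α q)) ∈ Fam) (lam : ℕ → ℝ) :
    ε * ∑ i ∈ G, |lam i| ≤ Xnorm Fam (∑ i ∈ G, lam i • y i) := by
  set v := ∑ i ∈ G, lam i • y i
  have hv : ∀ i ∈ G, ∀ q ∈ F i, |dotc (α q) v| = |lam i| * |dotc (α q) (y i)| := by
    intro i hi q hq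
    rw [dotc_sum_smul_right G, Finset.sum_eq_single_of_mem i hi fun j _ hji => by
      rw [hsep i j hji.symm q hq, mul_zero], abs_mul]
  calc ε * ∑ i ∈ G, |lam i| ≤ ∑ i ∈ G, |lam i| * ∑ q ∈ F i, |dotc (α q) (y i)| := by
        rw [Finset.mul_sum]
        exact Finset.sum_le_sum fun i _ => by
          rw [mul_comm]
          exact mul_le_mul_of_nonneg_left (hgood i) (abs_nonneg _)
    _ = ∑ q ∈ G.biUnion F, |dotc (α q) v| := by
        rw [Finset.sum_biUnion (hF.pairwiseDisjoint _)]
        refine Finset.sum_congr rfl fun i hi => ?_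
        rw [Finset.mul_sum]
        exact Finset.sum_congr rfl fun q hq => (hv i hi q hq).symm
    _ ≤ Xnorm Fam v := h.sum_abs_dotc_le_Xnorm hG v

end IsVeryFastGrowing

theorem exists_separated_subseq {α : ℕ → c00} (hα₀ : ∀ q, α q ≠ 0)
    (hα : Successive fun q => (α q).support) {F : ℕ → Finset ℕ} (hF : Successive F)
    {y : ℕ → c00} (hy : Successive fun j => (y j).support) {P : ℕ → Prop}
    (hP : ∃ᶠ k in atTop, P k) (Φ : ℕ → ℕ) :
    ∃ k : ℕ → ℕ, StrictMono k ∧ (∀ j, P (k j)) ∧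
      (∀ i j, i ≠ j → ∀ q ∈ F (k i), dotc (α q) (y (k j)) = 0) ∧
      Successive (fun j => (F (k j)).image fun q => minSupp (α q)) ∧
      ∀ j, ∀ q ∈ F (k j), Φ j < minSupp (α q) := by
  let A : ℕ → Finset ℕ := fun k => (y k).support ∪ (F k).biUnion fun q => (α q).support
  have hA : ∀ B, ∀ᶠ k in atTop, ∀ a ∈ A k, B < a := fun B =>
    ((hy.eventually_forall_lt B).and ((hF.biUnion hα).eventually_forall_lt B)).mono
      fun k hk a ha => (Finset.mem_union.1 ha).elim (hk.1 a) (hk.2 a)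
  obtain ⟨k, hk, hPk, hAk, hΦ⟩ := exists_strictMono_successive hP hA Φ
  have hsub : ∀ j, ∀ q ∈ F (k j), (α q).support ⊆ A (k j) := fun j q hq =>
    (Finset.subset_biUnion_of_mem (fun q => (α q).support) hq).trans Finset.subset_union_right
  have hmin : ∀ j, ∀ q ∈ F (k j), minSupp (α q) ∈ A (k j) := fun j q hq =>
    hsub j q hq (minSupp_mem (hα₀ q))
  refine ⟨k, hk, hPk, fun i j hij q hq => dotc_eq_zero_of_disjoint ?_, ?_,
    fun j q hq => hΦ j _ (hmin j q hq)⟩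
  · exact (hAk.pairwiseDisjoint Set.univ (Set.mem_univ i) (Set.mem_univ j) hij).mono
      (hsub i q hq) Finset.subset_union_left
  · intro i j hij a ha b hb
    obtain ⟨p, hp, rfl⟩ := Finset.mem_image.1 ha
    obtain ⟨q, hq, rfl⟩ := Finset.mem_image.1 hb
    exact hAk i j hij _ (hmin i p hp) _ (hmin j q hq)

theorem exists_frequently_le_of_not_tendsto {s : ℕ → ℝ} (hs : ∀ k, 0 ≤ s k)
    (h : ¬Tendsto s atTop (𝓝 0)) : ∃ ε > 0, ∃ᶠ k in atTop, ε ≤ s k := by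
  by_contra! hcon
  exact h (tendsto_order.2 ⟨fun a ha => .of_forall fun k => ha.trans_le (hs k), hcon⟩)

theorem exists_frequently_of_not_alphaZero {SS : SchreierSystem} {ξ : Ordinal} {x : ℕ → c00}
    (h : ¬AlphaZero SS ξ x) :
    ∃ (n : ℕ) (α : ℕ → c00) (sz : ℕ → ℕ),
      IsVeryFastGrowing (Wset (SS.S (Ordinal.omega0 ^ ξ))) α sz ∧
      ∃ F : ℕ → Finset ℕ, Successive F ∧
        (∀ k, ((F k).image fun q => minSupp (α q)) ∈ SS.S (SS.seq (Ordinal.omega0 ^ ξ) n)) ∧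
        ∃ m : ℕ → ℕ, StrictMono m ∧
          ∃ ε > 0, ∃ᶠ k in atTop, ε ≤ ∑ q ∈ F k, |dotc (α q) (x (m k))| := by
  simp only [AlphaZero, not_forall] at h
  obtain ⟨n, α, sz, hα, hsupp, hsz, hmax, F, hF, hadm, m, hm, hlim⟩ := h
  obtain ⟨ε, hε, hfreq⟩ := exists_frequently_le_of_not_tendsto
    (fun k => Finset.sum_nonneg fun q _ => abs_nonneg _) hlim
  exact ⟨n, α, sz, ⟨hα, hsupp, hsz, hmax⟩, F, hF, hadm, m, hm, ε, hε, hfreq⟩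

/-- **Statement 17.** If `(x_i)` is a normalized block sequence in `𝔛_{0,1}^{ω^ξ}` with
`α_{<ω^ξ}((x_i)) > 0`, then some subsequence `(x_{M i})` is an `ℓ₁^{ω^ξ}` spreading model:
there is `ε > 0` with `‖Σ_{i∈G} λ_i x_{M i}‖ ≥ ε Σ_{i∈G} |λ_i|` for all `G ∈ 𝓢_{ω^ξ}`. -/
theorem statement17 (SS : SchreierSystem) (ξ : Ordinal) (h1 : 1 ≤ ξ) (hξ : ξ < omega1)
    (x : ℕ → c00) (hx : IsNormBlock (SS.S (Ordinal.omega0 ^ ξ)) x)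
    (h : ¬ AlphaZero SS ξ x) :
    ∃ M : ℕ → ℕ, StrictMono M ∧ ∃ ε : ℝ, 0 < ε ∧
      ∀ G : Finset ℕ, G ∈ SS.S (Ordinal.omega0 ^ ξ) → ∀ lam : ℕ → ℝ,
        ε * ∑ i ∈ G, |lam i| ≤
          Xnorm (SS.S (Ordinal.omega0 ^ ξ)) (∑ i ∈ G, lam i • x (M i)) := by
  have hζ : Ordinal.omega0 ^ ξ < omega1 := Ordinal.isPrincipal_opow_ord
    (Cardinal.aleph0_le_aleph 1) (Cardinal.omega0_lt_ord.2 Cardinal.aleph0_lt_aleph_one) hξ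
  have hζlim : Order.IsSuccLimit (Ordinal.omega0 ^ ξ) :=
    Ordinal.isSuccLimit_opow_left Ordinal.isSuccLimit_omega0 (Order.one_le_iff_ne_zero.1 h1)
  obtain ⟨n, α, sz, hα, F, hF, hFadm, m, hm, ε, hε, hfreq⟩ :=
    exists_frequently_of_not_alphaZero h
  have hη := SS.seq_lt _ hζ hζlim n
  obtain ⟨φ, -, hφ⟩ := exists_biUnion_mem_S_add SS (hη.trans hζ) hζ
  obtain ⟨k, hk, hgood, hsep, hsucc, hφk⟩ := exists_separated_subseq hα.ne_zero
    hα.successive_support hF (y := x ∘ m) (Successive.comp hx.1.2 hm) hfreq φ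
  refine ⟨m ∘ k, hm.comp hk, ε, hε, fun G hG lam =>
    hα.le_Xnorm_of_separated (hF.comp hk) hgood hsep ?_ lam⟩
  rw [Finset.biUnion_image, ← Ordinal.add_omega0_opow hη]
  refine hφ G hG _ (fun i _ => hFadm (k i))
    (fun i _ => (Finset.nonempty_of_sum_ne_zero (hε.trans_le (hgood i)).ne').image _)
    (fun i _ j _ => hsucc i j) fun i _ a ha => ?_
  obtain ⟨q, hq, rfl⟩ := Finset.mem_image.1 ha
  exact (hφk i q hq).le
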